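/- arXiv:2412.08613 — 2 statements merged into one kernel-verified Lean document; each statement's English description precedes it below -/
import Mathlib

section
/- Let E be a real inner product space, h : E → ℝ convex, and f₁ : E → ℝ convex and differentiable with L-Lipschitz continuous gradient (L > 0). Let σ > 0, x₀, y₀, y₁ ∈ E, and suppose x̂ minimizes x ↦ h(x) + (1/(2σ))‖x − (x₀ − σ(y₀ + ∇f₁(x₀)))‖² over E. Then for every x ∈ E: h(x) + f₁(x) − h(x̂) − f₁(x̂) + ⟨x − x̂, y₁⟩ ≥ ⟨x − x̂, (y₁ − y₀) + (1/σ)(x₀ − x̂)⟩ − (L/2)‖x̂ − x₀‖². -/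
/-! Three first-order estimates add up to the claim: the optimality condition of the proximal
step, `h x̂ + (1/σ)⟪a - x̂, x - x̂⟫ ≤ h x` with `a = x₀ - σ (y₀ + ∇f₁ x₀)`; the gradient inequality
of the convex `f₁` at `x₀`, tested at `x`; and the descent lemma for the `L`-smooth `f₁` between
`x₀` and `x̂`. The optimality condition holds because, along the segment from `x̂` to `x`, the
quadratic part of the proximal objective only contributes at second order, so convexity of `h`
forces the first-order term to have the right sign. -/

open RealInnerProductSpace Filter Topology Set

lemma le_of_forall_Ioc_le_add_mul {a b c : ℝ} (h : ∀ t ∈ Ioc (0 : ℝ) 1, a ≤ b + t * c) :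
    a ≤ b := by
  have hcont : Continuous fun t : ℝ => b + t * c := by fun_prop
  have hlim : Tendsto (fun t : ℝ => b + t * c) (𝓝[>] 0) (𝓝 b) := by
    simpa using (hcont.tendsto 0).mono_left nhdsWithin_le_nhds
  exact ge_of_tendsto hlim (eventually_of_mem (Ioc_mem_nhdsGT one_pos) h)

section

variable {E : Type*} [NormedAddCommGroup E] [InnerProductSpace ℝ E]

lemma ConvexOn.le_of_forall_le_add_mul_norm_sq {g : E → ℝ} (hg : ConvexOn ℝ univ g)
    {x₀ : E} {c : ℝ} (hx₀ : ∀ z, g x₀ ≤ g z + c * ‖z - x₀‖ ^ 2) (x : E) : g x₀ ≤ g x := by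
  refine le_of_forall_Ioc_le_add_mul (c := c * ‖x - x₀‖ ^ 2) fun t ⟨ht₀, ht₁⟩ => ?_
  have hconv : g (x₀ + t • (x - x₀)) ≤ (1 - t) * g x₀ + t * g x := by
    have := hg.2 (mem_univ x₀) (mem_univ x) (sub_nonneg.2 ht₁) ht₀.le (sub_add_cancel 1 t)
    rwa [show (1 - t) • x₀ + t • x = x₀ + t • (x - x₀) by module] at this
  have hquad := hx₀ (x₀ + t • (x - x₀))
  rw [add_sub_cancel_left, norm_smul, Real.norm_of_nonneg ht₀.le] at hquad
  have : t * g x₀ ≤ t * (g x + t * (c * ‖x - x₀‖ ^ 2)) := by nlinarith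
  exact le_of_mul_le_mul_left this ht₀

lemma ConvexOn.add_inner_le_of_isMinOn_add_mul_norm_sq {h : E → ℝ} (hh : ConvexOn ℝ univ h)
    {s : ℝ} {a xhat : E} (hmin : IsMinOn (fun z => h z + s * ‖z - a‖ ^ 2) univ xhat) (x : E) :
    h xhat + 2 * s * ⟪a - xhat, x - xhat⟫ ≤ h x := by
  have hexp (z : E) :
      ‖z - a‖ ^ 2 = ‖xhat - a‖ ^ 2 + 2 * ⟪xhat - a, z - xhat⟫ + ‖z - xhat‖ ^ 2 := by
    rw [← norm_add_sq_real, sub_add_sub_cancel']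
  set v := (2 * s) • (xhat - a)
  have hv (z : E) : ⟪v, z⟫ - ⟪v, xhat⟫ = 2 * s * ⟪xhat - a, z - xhat⟫ := by
    rw [← inner_sub_right, real_inner_smul_left]
  -- Subtracting the linear part of the quadratic leaves a convex function that is minimal at
  -- `xhat` up to the error `s * ‖z - xhat‖ ^ 2`.
  have hg : ConvexOn ℝ univ fun z => h z + ⟪v, z⟫ :=
    hh.add ((innerₛₗ ℝ v).convexOn convex_univ)
  have key := hg.le_of_forall_le_add_mul_norm_sq (x₀ := xhat) (c := s) (fun z => by
    have := isMinOn_univ_iff.1 hmin z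
    rw [hexp z] at this
    linarith [hv z]) x
  rw [← neg_sub xhat a, inner_neg_left]
  linarith [hv x]

variable [CompleteSpace E]

lemma HasGradientAt.hasDerivAt_comp_lineMap {f : E → ℝ} {g x y : E} {t : ℝ}
    (hf : HasGradientAt f g (AffineMap.lineMap x y t)) :
    HasDerivAt (f ∘ AffineMap.lineMap (k := ℝ) x y) ⟪g, y - x⟫ t :=
  hf.hasFDerivAt.comp_hasDerivAt t AffineMap.hasDerivAt_lineMap

lemma ConvexOn.add_inner_gradient_le {f : E → ℝ} {f' x₀ : E} (hf : ConvexOn ℝ univ f)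
    (hf' : HasGradientAt f f' x₀) (x : E) : f x₀ + ⟪f', x - x₀⟫ ≤ f x := by
  have hline : HasDerivAt (f ∘ AffineMap.lineMap (k := ℝ) x₀ x) ⟪f', x - x₀⟫ 0 :=
    HasGradientAt.hasDerivAt_comp_lineMap (by rwa [AffineMap.lineMap_apply_zero])
  have := (hf.comp_affineMap (AffineMap.lineMap x₀ x)).le_slope_of_hasDerivAt
    (mem_univ 0) (mem_univ 1) one_pos hline
  rw [slope_def_field] at this
  simp only [Function.comp_apply, AffineMap.lineMap_apply_zero, AffineMap.lineMap_apply_one,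
    sub_zero, div_one] at this
  linarith

lemma le_add_inner_gradient_add_mul_norm_sq {f : E → ℝ} {f' : E → E} {L : ℝ}
    (hf : ∀ x, HasGradientAt f (f' x) x) (hlip : ∀ x y, ‖f' x - f' y‖ ≤ L * ‖x - y‖)
    (x y : E) : f y ≤ f x + ⟪f' x, y - x⟫ + L / 2 * ‖y - x‖ ^ 2 := by
  set d := y - x
  set ψ : ℝ → ℝ := fun t =>
    f (AffineMap.lineMap x y t) - t * ⟪f' x, d⟫ - L / 2 * t ^ 2 * ‖d‖ ^ 2
  have hψ (t : ℝ) :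
      HasDerivAt ψ (⟪f' (AffineMap.lineMap x y t) - f' x, d⟫ - L * t * ‖d‖ ^ 2) t := by
    have := (((hf _).hasDerivAt_comp_lineMap (x := x) (y := y) (t := t)).sub
      ((hasDerivAt_id t).mul_const ⟪f' x, d⟫)).sub
      (((hasDerivAt_pow 2 t).const_mul (L / 2)).mul_const (‖d‖ ^ 2))
    exact this.congr_deriv (by rw [inner_sub_left]; ring)
  have hgrad_lip (t : ℝ) (ht : 0 ≤ t) :
      ⟪f' (AffineMap.lineMap x y t) - f' x, d⟫ ≤ L * t * ‖d‖ ^ 2 :=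
    calc _ ≤ ‖f' (AffineMap.lineMap x y t) - f' x‖ * ‖d‖ := real_inner_le_norm _ _
      _ ≤ L * ‖AffineMap.lineMap x y t - x‖ * ‖d‖ := by gcongr; exact hlip _ _
      _ = L * t * ‖d‖ ^ 2 := by
        rw [AffineMap.lineMap_apply_module', add_sub_cancel_right, norm_smul,
          Real.norm_of_nonneg ht]
        ring
  have hanti : AntitoneOn ψ (Icc 0 1) := by
    refine antitoneOn_of_deriv_nonpos (convex_Icc 0 1)
      (fun t _ => (hψ t).continuousAt.continuousWithinAt)
      (fun t _ => (hψ t).differentiableAt.differentiableWithinAt) fun t ht => ?_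
    rw [interior_Icc] at ht
    rw [(hψ t).deriv]
    linarith [hgrad_lip t ht.1.le]
  have := hanti (left_mem_Icc.2 zero_le_one) (right_mem_Icc.2 zero_le_one) zero_le_one
  simp only [ψ, AffineMap.lineMap_apply_zero, AffineMap.lineMap_apply_one] at this
  linarith

end

theorem stmt_5_general {E : Type*} [NormedAddCommGroup E] [InnerProductSpace ℝ E] [CompleteSpace E]
    (h f₁ : E → ℝ) (f₁' : E → E) (L : ℝ)
    (hconv : ConvexOn ℝ Set.univ h)
    (hf₁conv : ConvexOn ℝ Set.univ f₁)
    (hf₁diff : ∀ x, HasGradientAt f₁ (f₁' x) x)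
    (hf₁lip : ∀ x y, ‖f₁' x - f₁' y‖ ≤ L * ‖x - y‖)
    (σ : ℝ) (hσ : 0 < σ) (x₀ y₀ y₁ xhat : E)
    (hmin : ∀ x : E,
      h xhat + 1 / (2 * σ) * ‖xhat - (x₀ - σ • (y₀ + f₁' x₀))‖ ^ 2 ≤
      h x + 1 / (2 * σ) * ‖x - (x₀ - σ • (y₀ + f₁' x₀))‖ ^ 2) :
    ∀ x : E,
      ⟪x - xhat, (y₁ - y₀) + (1 / σ) • (x₀ - xhat)⟫ - L / 2 * ‖xhat - x₀‖ ^ 2 ≤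
      h x + f₁ x - h xhat - f₁ xhat + ⟪x - xhat, y₁⟫ := by
  intro x
  have hprox := hconv.add_inner_le_of_isMinOn_add_mul_norm_sq (isMinOn_univ_iff.2 hmin) x
  rw [show 2 * (1 / (2 * σ)) = 1 / σ by ring] at hprox
  have hf₁x := hf₁conv.add_inner_gradient_le (hf₁diff x₀) x
  have hf₁xhat := le_add_inner_gradient_add_mul_norm_sq hf₁diff hf₁lip x₀ xhat
  have hsplit : ⟪f₁' x₀, x - xhat⟫ = ⟪f₁' x₀, x - x₀⟫ - ⟪f₁' x₀, xhat - x₀⟫ := by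
    rw [← inner_sub_right, sub_sub_sub_cancel_right]
  have hdir : (1 / σ) • (x₀ - σ • (y₀ + f₁' x₀) - xhat) + f₁' x₀ + y₁ =
      (y₁ - y₀) + (1 / σ) • (x₀ - xhat) := by
    rw [sub_right_comm, smul_sub, smul_smul, one_div_mul_cancel hσ.ne', one_smul]
    abel
  rw [← hdir, inner_add_right, inner_add_right, real_inner_smul_right, real_inner_comm,
    real_inner_comm (f₁' x₀)]
  linarith

theorem stmt_5 {E : Type*} [NormedAddCommGroup E] [InnerProductSpace ℝ E] [CompleteSpace E]
    (h f₁ : E → ℝ) (f₁' : E → E) (L : ℝ) (hL : 0 < L)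
    (hconv : ConvexOn ℝ Set.univ h)
    (hf₁conv : ConvexOn ℝ Set.univ f₁)
    (hf₁diff : ∀ x, HasGradientAt f₁ (f₁' x) x)
    (hf₁lip : ∀ x y, ‖f₁' x - f₁' y‖ ≤ L * ‖x - y‖)
    (σ : ℝ) (hσ : 0 < σ) (x₀ y₀ y₁ xhat : E)
    (hmin : ∀ x : E,
      h xhat + 1 / (2 * σ) * ‖xhat - (x₀ - σ • (y₀ + f₁' x₀))‖ ^ 2 ≤
      h x + 1 / (2 * σ) * ‖x - (x₀ - σ • (y₀ + f₁' x₀))‖ ^ 2) :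
    ∀ x : E,
      ⟪x - xhat, (y₁ - y₀) + (1 / σ) • (x₀ - xhat)⟫ - L / 2 * ‖xhat - x₀‖ ^ 2 ≤
      h x + f₁ x - h xhat - f₁ xhat + ⟪x - xhat, y₁⟫ :=
  stmt_5_general h f₁ f₁' L hconv hf₁conv hf₁diff hf₁lip σ hσ x₀ y₀ y₁ xhat hmin
end

section
/- (Theorem 4, O(1/N) ergodic rate of the fair Condat–Vũ method.) Let E be a real inner product space, f₁ : E → ℝ convex and differentiable with L-Lipschitz continuous gradient (L > 0), h : E → ℝ and φ : E → ℝ convex, and σ, τ > 0 with στ < 1 − σL. Given x⁰, y⁰ ∈ E, define for k ≥ 0: x̂ᵏ⁺¹ minimizes x ↦ h(x) + (1/(2σ))‖x − (xᵏ − σ(yᵏ + ∇f₁(xᵏ)))‖²; yᵏ⁺¹ minimizes y ↦ φ(y) + (1/(2τ))‖y − (yᵏ + τ(2x̂ᵏ⁺¹ − xᵏ))‖²; xᵏ⁺¹ := x̂ᵏ⁺¹. Let (x*, y*) be a saddle point of L(x,y) = f₁(x) + h(x) + ⟨x,y⟩ − φ(y), and for N ≥ 1 set x̄_N := (1/N)·Σ_{k=1}^{N}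 x̂ᵏ and ȳ_N := (1/N)·Σ_{k=1}^{N} yᵏ. Then [f₁(x̄_N) + h(x̄_N) + φ(ȳ_N)] − [f₁(x*) + h(x*) + φ(y*)] − (⟨x* − x̄_N, y*⟩ − ⟨y* − ȳ_N, x*⟩) ≤ (1/(2N))·[(1/σ)‖x⁰ − x*‖² − 2⟨x⁰ − x*, y⁰ − y*⟩ + (1/τ)‖y⁰ − y*‖²]. -/
/-!
Each iteration consists of two proximal steps. Their optimality conditions (three-point
inequalities), the descent lemma for `f₁` and the gradient inequality of convexity bound the gap
at `(xᵏ⁺¹, yᵏ⁺¹)` by half the decrease of `Vₖ = ‖(xᵏ - x*, yᵏ - y*)‖²_M`, where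
`M = [[σ⁻¹, -1], [-1, τ⁻¹]]`, up to the cross term `⟪xᵏ⁺¹ - xᵏ, yᵏ⁺¹ - yᵏ⟫`. Young's inequality
absorbs that term into the slack `‖xᵏ⁺¹ - xᵏ‖² / (2σ) + ‖yᵏ⁺¹ - yᵏ‖² / (2τ)` left by the proximal
steps, precisely because `στ ≤ 1 - σL`. Summing over `k` telescopes to `V₀ / 2` (as `V_N ≥ 0`,
`M` being positive semidefinite for `στ ≤ 1`), and Jensen's inequality for the convex gap passes
to the ergodic averages.
-/

open RealInnerProductSpace Set Filter Topology Finset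

section ConvexAnalysis

variable {E : Type*} [NormedAddCommGroup E] [InnerProductSpace ℝ E]

theorem HasGradientAt.hasDerivAt_comp_lineMap_s14 [CompleteSpace E] {f : E → ℝ} {f' a b : E} {t : ℝ}
    (hf : HasGradientAt f f' (AffineMap.lineMap a b t)) :
    HasDerivAt (fun s ↦ f (AffineMap.lineMap a b s)) ⟪f', b - a⟫ t :=
  hf.hasFDerivAt.comp_hasDerivAt t AffineMap.hasDerivAt_lineMap

theorem ConvexOn.add_inner_le_of_hasGradientAt [CompleteSpace E] {f : E → ℝ} {f' a : E}
    (hf : ConvexOn ℝ univ f) (hf' : HasGradientAt f f' a) (z : E) :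
    f a + ⟪f', z - a⟫ ≤ f z := by
  have hline : ConvexOn ℝ univ (fun t ↦ f (AffineMap.lineMap a z t)) :=
    hf.comp_affineMap (AffineMap.lineMap a z)
  have hderiv := HasGradientAt.hasDerivAt_comp_lineMap_s14 (t := 0) (b := z)
    (by rwa [AffineMap.lineMap_apply_zero])
  have hslope := hline.le_slope_of_hasDerivAt (mem_univ 0) (mem_univ 1) one_pos hderiv
  simp only [slope_def_field, AffineMap.lineMap_apply_zero, AffineMap.lineMap_apply_one] at hslope
  linarith

theorem le_add_inner_add_sq_of_lipschitz_gradient [CompleteSpace E] {f : E → ℝ} {f' : E → E}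
    {L : ℝ} (hf : ∀ x, HasGradientAt f (f' x) x) (hlip : ∀ x y, ‖f' x - f' y‖ ≤ L * ‖x - y‖)
    (a b : E) : f b ≤ f a + ⟪f' a, b - a⟫ + L / 2 * ‖b - a‖ ^ 2 := by
  have hφ (t : ℝ) := (hf (AffineMap.lineMap a b t)).hasDerivAt_comp_lineMap_s14
  have hB (t : ℝ) : HasDerivAt (fun s ↦ f a + s * ⟪f' a, b - a⟫ + L / 2 * s ^ 2 * ‖b - a‖ ^ 2)
      (⟪f' a, b - a⟫ + L * t * ‖b - a‖ ^ 2) t := by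
    have hlin := ((hasDerivAt_id t).mul_const ⟪f' a, b - a⟫).const_add (f a)
    have hquad := ((hasDerivAt_pow 2 t).const_mul (L / 2)).mul_const (‖b - a‖ ^ 2)
    exact (hlin.add hquad).congr_deriv (by norm_num only; ring)
  have hbound (t : ℝ) (ht : t ∈ Ico (0 : ℝ) 1) :
      ⟪f' (AffineMap.lineMap a b t), b - a⟫ ≤ ⟪f' a, b - a⟫ + L * t * ‖b - a‖ ^ 2 := by
    have hdist : ‖AffineMap.lineMap a b t - a‖ = t * ‖b - a‖ := by
      rw [← vsub_eq_sub, AffineMap.lineMap_vsub_left, norm_smul, Real.norm_of_nonneg ht.1,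
        vsub_eq_sub]
    calc ⟪f' (AffineMap.lineMap a b t), b - a⟫
        = ⟪f' a, b - a⟫ + ⟪f' (AffineMap.lineMap a b t) - f' a, b - a⟫ := by
          rw [inner_sub_left]; ring
      _ ≤ ⟪f' a, b - a⟫ + ‖f' (AffineMap.lineMap a b t) - f' a‖ * ‖b - a‖ := by
          gcongr; exact real_inner_le_norm _ _
      _ ≤ ⟪f' a, b - a⟫ + L * (t * ‖b - a‖) * ‖b - a‖ := by
          gcongr; exact hdist ▸ hlip _ _
      _ = ⟪f' a, b - a⟫ + L * t * ‖b - a‖ ^ 2 := by ring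
  have := image_le_of_deriv_right_le_deriv_boundary
    (fun t _ ↦ (hφ t).continuousAt.continuousWithinAt) (fun t _ ↦ (hφ t).hasDerivWithinAt)
    (by simp) (fun t _ ↦ (hB t).continuousAt.continuousWithinAt)
    (fun t _ ↦ (hB t).hasDerivWithinAt) hbound (right_mem_Icc.2 zero_le_one)
  simpa using this

theorem ConvexOn.add_inner_le_of_prox {g : E → ℝ} (hg : ConvexOn ℝ univ g) {σ : ℝ} {a p : E}
    (hp : ∀ z, g p + 1 / (2 * σ) * ‖p - a‖ ^ 2 ≤ g z + 1 / (2 * σ) * ‖z - a‖ ^ 2) (z : E) :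
    g p + σ⁻¹ * ⟪a - p, z - p⟫ ≤ g z := by
  have hsmall : ∀ t ∈ Ioc (0 : ℝ) 1,
      g p + σ⁻¹ * ⟪a - p, z - p⟫ ≤ g z + t * (1 / (2 * σ) * ‖z - p‖ ^ 2) := by
    rintro t ⟨ht0, ht1⟩
    have hconv : g (p + t • (z - p)) ≤ (1 - t) * g p + t * g z := by
      have := hg.2 (mem_univ p) (mem_univ z) (sub_nonneg.2 ht1) ht0.le (by ring)
      rwa [show (1 - t) • p + t • z = p + t • (z - p) by module] at this
    have hexpand : ‖p + t • (z - p) - a‖ ^ 2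
        = ‖p - a‖ ^ 2 - 2 * t * ⟪a - p, z - p⟫ + t ^ 2 * ‖z - p‖ ^ 2 := by
      rw [show p + t • (z - p) - a = t • (z - p) - (a - p) by abel, norm_sub_sq_real,
        norm_smul, real_inner_smul_left, mul_pow, Real.norm_of_nonneg ht0.le,
        real_inner_comm, norm_sub_rev a p]
      ring
    have hmin := hp (p + t • (z - p))
    rw [hexpand] at hmin
    refine le_of_mul_le_mul_left ?_ ht0
    linear_combination hmin + hconv
  have hlim : Tendsto (fun t ↦ g z + t * (1 / (2 * σ) * ‖z - p‖ ^ 2)) (𝓝[>] 0) (𝓝 (g z)) := by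
    exact tendsto_nhdsWithin_of_tendsto_nhds ((by fun_prop : Continuous _).tendsto' _ _ (by simp))
  refine ge_of_tendsto hlim ?_
  filter_upwards [Ioc_mem_nhdsGT one_pos] with t ht using hsmall t ht

theorem ConvexOn.sub_le_of_prox {g : E → ℝ} (hg : ConvexOn ℝ univ g) {σ : ℝ} (hσ : σ ≠ 0)
    {c d p : E}
    (hp : ∀ z, g p + 1 / (2 * σ) * ‖p - (c + σ • d)‖ ^ 2 ≤
      g z + 1 / (2 * σ) * ‖z - (c + σ • d)‖ ^ 2) (z : E) :
    g p - g z ≤ (‖c - z‖ ^ 2 - ‖p - z‖ ^ 2 - ‖p - c‖ ^ 2) / (2 * σ) + ⟪d, p - z⟫ := by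
  have hsub := hg.add_inner_le_of_prox hp z
  have hsplit : ⟪c + σ • d - p, z - p⟫ = ⟪c - p, z - p⟫ + σ * ⟪d, z - p⟫ := by
    rw [add_sub_right_comm, inner_add_left, real_inner_smul_left]
  have hpolar : ‖c - z‖ ^ 2 = ‖p - c‖ ^ 2 - 2 * ⟪c - p, z - p⟫ + ‖p - z‖ ^ 2 := by
    rw [show c - z = (c - p) - (z - p) by abel, norm_sub_sq_real, norm_sub_rev p c,
      norm_sub_rev p z]
  rw [hsplit, mul_add, ← mul_assoc, inv_mul_cancel₀ hσ, one_mul] at hsub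
  have hdz : ⟪d, p - z⟫ = -⟪d, z - p⟫ := by rw [← inner_neg_right, neg_sub]
  calc g p - g z ≤ -(σ⁻¹ * ⟪c - p, z - p⟫) - ⟪d, z - p⟫ := by linarith
    _ = _ := by rw [hpolar, hdz]; field_simp; ring

theorem ConvexOn.map_finset_average_le {g : E → ℝ} (hg : ConvexOn ℝ univ g) {ι : Type*}
    {s : Finset ι} (hs : s.Nonempty) (p : ι → E) :
    g ((#s : ℝ)⁻¹ • ∑ k ∈ s, p k) ≤ (#s : ℝ)⁻¹ * ∑ k ∈ s, g (p k) := by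
  have hcard : (#s : ℝ) ≠ 0 := by exact_mod_cast hs.card_pos.ne'
  have hjensen := hg.map_sum_le (t := s) (w := fun _ ↦ (#s : ℝ)⁻¹) (p := p)
    (fun _ _ ↦ by positivity) (by simp [hcard]) (fun _ _ ↦ mem_univ _)
  simpa only [← smul_sum, smul_eq_mul, ← mul_sum] using hjensen

theorem real_inner_le_young {α τ : ℝ} (hτ : 0 < τ) (hατ : τ ≤ α) (w z : E) :
    ⟪w, z⟫ ≤ α / 2 * ‖w‖ ^ 2 + τ⁻¹ / 2 * ‖z‖ ^ 2 := by
  have hsq : 0 ≤ τ⁻¹ * (τ * ‖w‖ - ‖z‖) ^ 2 := by positivity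
  have hexpand : τ⁻¹ * (τ * ‖w‖ - ‖z‖) ^ 2 = τ * ‖w‖ ^ 2 - 2 * (‖w‖ * ‖z‖) + τ⁻¹ * ‖z‖ ^ 2 := by
    field_simp; ring
  have hα : τ * ‖w‖ ^ 2 ≤ α * ‖w‖ ^ 2 := by gcongr
  linarith [real_inner_le_norm w z]

end ConvexAnalysis

section CondatVu

variable {E : Type*} [NormedAddCommGroup E] [InnerProductSpace ℝ E]

noncomputable def primalDualNormSq (σ τ : ℝ) (u v : E) : ℝ :=
  1 / σ * ‖u‖ ^ 2 - 2 * ⟪u, v⟫ + 1 / τ * ‖v‖ ^ 2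

theorem primalDualNormSq_nonneg {σ τ : ℝ} (hσ : 0 < σ) (hτ : 0 < τ) (hστ : σ * τ ≤ 1)
    (u v : E) : 0 ≤ primalDualNormSq σ τ u v := by
  have hτσ : τ ≤ 1 / σ := (le_div_iff₀ hσ).2 (by linarith)
  have hyoung := real_inner_le_young hτ hτσ u v
  unfold primalDualNormSq
  rw [one_div τ]
  linarith

noncomputable def primalDualGap (f h φ : E → ℝ) (xs ys x y : E) : ℝ :=
  f x + h x + φ y - (f xs + h xs + φ ys) - (⟪xs - x, ys⟫ - ⟪ys - y, xs⟫)

theorem primalDualGap_le_of_condatVu_step {f h φ : E → ℝ} {f' : E → E} {L σ τ : ℝ}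
    [CompleteSpace E] (hfconv : ConvexOn ℝ univ f) (hf : ∀ x, HasGradientAt f (f' x) x)
    (hlip : ∀ x y, ‖f' x - f' y‖ ≤ L * ‖x - y‖) (hh : ConvexOn ℝ univ h)
    (hφ : ConvexOn ℝ univ φ) (hσ : 0 < σ) (hτ : 0 < τ) (hστ : σ * τ ≤ 1 - σ * L)
    {x₀ y₀ x₁ y₁ : E}
    (hx₁ : ∀ z, h x₁ + 1 / (2 * σ) * ‖x₁ - (x₀ - σ • (y₀ + f' x₀))‖ ^ 2 ≤
      h z + 1 / (2 * σ) * ‖z - (x₀ - σ • (y₀ + f' x₀))‖ ^ 2)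
    (hy₁ : ∀ w, φ y₁ + 1 / (2 * τ) * ‖y₁ - (y₀ + τ • (2 • x₁ - x₀))‖ ^ 2 ≤
      φ w + 1 / (2 * τ) * ‖w - (y₀ + τ • (2 • x₁ - x₀))‖ ^ 2)
    (xs ys : E) :
    primalDualGap f h φ xs ys x₁ y₁ ≤
      (primalDualNormSq σ τ (x₀ - xs) (y₀ - ys)
        - primalDualNormSq σ τ (x₁ - xs) (y₁ - ys)) / 2 := by
  have hprimal := hh.sub_le_of_prox hσ.ne' (c := x₀) (d := -(y₀ + f' x₀))
    (by simpa only [smul_neg, ← sub_eq_add_neg] using hx₁) xs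
  have hdual := hφ.sub_le_of_prox hτ.ne' hy₁ ys
  have hsmooth : f x₁ - f xs ≤ ⟪f' x₀, x₁ - xs⟫ + L / 2 * ‖x₁ - x₀‖ ^ 2 := by
    have hdescent := le_add_inner_add_sq_of_lipschitz_gradient hf hlip x₀ x₁
    have hsupport := hfconv.add_inner_le_of_hasGradientAt (hf x₀) xs
    have hsplit : ⟪f' x₀, x₁ - xs⟫ = ⟪f' x₀, x₁ - x₀⟫ - ⟪f' x₀, xs - x₀⟫ := by
      rw [← inner_sub_right, sub_sub_sub_cancel_right]
    linarith
  have hτα : τ ≤ 1 / σ - L := by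
    rw [le_sub_iff_add_le, le_div_iff₀ hσ]
    linarith
  have hyoung := real_inner_le_young hτ hτα (x₁ - x₀) (y₁ - y₀)
  have hbilin : ⟪-(y₀ + f' x₀), x₁ - xs⟫ + ⟪2 • x₁ - x₀, y₁ - ys⟫ + ⟪f' x₀, x₁ - xs⟫
      - (⟪xs - x₁, ys⟫ - ⟪ys - y₁, xs⟫)
      = ⟪x₁ - xs, y₁ - ys⟫ - ⟪x₀ - xs, y₀ - ys⟫ + ⟪x₁ - x₀, y₁ - y₀⟫ := by
    simp only [inner_neg_left, inner_add_left, inner_sub_left, inner_sub_right, two_nsmul]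
    rw [real_inner_comm x₁ y₀, real_inner_comm xs y₀, real_inner_comm xs ys,
      real_inner_comm xs y₁]
    ring
  unfold primalDualGap primalDualNormSq
  linear_combination hprimal + hdual + hsmooth + hyoung + hbilin

theorem primalDualGap_average_le {f h φ : E → ℝ} (hf : ConvexOn ℝ univ f)
    (hh : ConvexOn ℝ univ h) (hφ : ConvexOn ℝ univ φ) {ι : Type*} {s : Finset ι}
    (hs : s.Nonempty) (x y : ι → E) (xs ys : E) :
    primalDualGap f h φ xs ys ((#s : ℝ)⁻¹ • ∑ k ∈ s, x k) ((#s : ℝ)⁻¹ • ∑ k ∈ s, y k) ≤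
      (#s : ℝ)⁻¹ * ∑ k ∈ s, primalDualGap f h φ xs ys (x k) (y k) := by
  have hcard : (#s : ℝ) ≠ 0 := by exact_mod_cast hs.card_pos.ne'
  have hfx := hf.map_finset_average_le hs x
  have hhx := hh.map_finset_average_le hs x
  have hφy := hφ.map_finset_average_le hs y
  have hlinear : (#s : ℝ)⁻¹ * ∑ k ∈ s, primalDualGap f h φ xs ys (x k) (y k) =
      (#s : ℝ)⁻¹ * ∑ k ∈ s, f (x k) + (#s : ℝ)⁻¹ * ∑ k ∈ s, h (x k)
        + (#s : ℝ)⁻¹ * ∑ k ∈ s, φ (y k) - (f xs + h xs + φ ys)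
        - (⟪xs - (#s : ℝ)⁻¹ • ∑ k ∈ s, x k, ys⟫ - ⟪ys - (#s : ℝ)⁻¹ • ∑ k ∈ s, y k, xs⟫) := by
    simp only [primalDualGap, inner_sub_left, real_inner_smul_left, sum_inner,
      sum_sub_distrib, sum_add_distrib, sum_const, nsmul_eq_mul]
    field_simp
  rw [hlinear]
  unfold primalDualGap
  linarith

end CondatVu

theorem stmt_14_general {E : Type*} [NormedAddCommGroup E] [InnerProductSpace ℝ E] [CompleteSpace E]
    (f₁ h φ : E → ℝ) (f₁' : E → E) (L : ℝ) (hL : 0 < L)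
    (hf₁conv : ConvexOn ℝ Set.univ f₁)
    (hf₁diff : ∀ x, HasGradientAt f₁ (f₁' x) x)
    (hf₁lip : ∀ x y, ‖f₁' x - f₁' y‖ ≤ L * ‖x - y‖)
    (hhconv : ConvexOn ℝ Set.univ h)
    (hφconv : ConvexOn ℝ Set.univ φ)
    (σ τ : ℝ) (hσ : 0 < σ) (hτ : 0 < τ) (hcond : σ * τ < 1 - σ * L)
    (x y xhat : ℕ → E)
    (hxhat : ∀ k, ∀ z : E,
      h (xhat (k + 1)) +
          1 / (2 * σ) * ‖xhat (k + 1) - (x k - σ • (y k + f₁' (x k)))‖ ^ 2 ≤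
      h z + 1 / (2 * σ) * ‖z - (x k - σ • (y k + f₁' (x k)))‖ ^ 2)
    (hy : ∀ k, ∀ w : E,
      φ (y (k + 1)) +
          1 / (2 * τ) * ‖y (k + 1) - (y k + τ • (2 • xhat (k + 1) - x k))‖ ^ 2 ≤
      φ w + 1 / (2 * τ) * ‖w - (y k + τ • (2 • xhat (k + 1) - x k))‖ ^ 2)
    (hx : ∀ k, x (k + 1) = xhat (k + 1))
    (xs ys : E) :
    ∀ N : ℕ, 1 ≤ N →
      (f₁ ((N : ℝ)⁻¹ • ∑ k ∈ Finset.Icc 1 N, xhat k)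
          + h ((N : ℝ)⁻¹ • ∑ k ∈ Finset.Icc 1 N, xhat k)
          + φ ((N : ℝ)⁻¹ • ∑ k ∈ Finset.Icc 1 N, y k))
        - (f₁ xs + h xs + φ ys)
        - (⟪xs - (N : ℝ)⁻¹ • ∑ k ∈ Finset.Icc 1 N, xhat k, ys⟫
            - ⟪ys - (N : ℝ)⁻¹ • ∑ k ∈ Finset.Icc 1 N, y k, xs⟫) ≤
      1 / (2 * N) *
        ((1 / σ) * ‖x 0 - xs‖ ^ 2 - 2 * ⟪x 0 - xs, y 0 - ys⟫ + (1 / τ) * ‖y 0 - ys‖ ^ 2) := by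
  intro N hN
  set V : ℕ → ℝ := fun k ↦ primalDualNormSq σ τ (x k - xs) (y k - ys)
  set G : ℕ → ℝ := fun k ↦ primalDualGap f₁ h φ xs ys (xhat k) (y k)
  have hstep (k : ℕ) : G (k + 1) ≤ (V k - V (k + 1)) / 2 := by
    simpa only [V, G, hx k] using primalDualGap_le_of_condatVu_step hf₁conv hf₁diff hf₁lip
      hhconv hφconv hσ hτ hcond.le (hxhat k) (hy k) xs ys
  have hVN : 0 ≤ V N := primalDualNormSq_nonneg hσ hτ (by linarith [mul_pos hσ hL]) _ _
  have htelescope : ∑ k ∈ Icc 1 N, G k ≤ V 0 / 2 :=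
    calc ∑ k ∈ Icc 1 N, G k = ∑ k ∈ range N, G (k + 1) := by
          rw [range_eq_Ico, sum_Ico_add', zero_add, Finset.Ico_add_one_right_eq_Icc]
      _ ≤ ∑ k ∈ range N, (V k - V (k + 1)) / 2 := sum_le_sum fun k _ ↦ hstep k
      _ = (V 0 - V N) / 2 := by rw [← sum_div, sum_range_sub']
      _ ≤ V 0 / 2 := by linarith
  have haverage := primalDualGap_average_le hf₁conv hhconv hφconv (nonempty_Icc.2 hN) xhat y xs ys
  rw [Nat.card_Icc, Nat.add_sub_cancel] at haverage
  calc _ ≤ (N : ℝ)⁻¹ * ∑ k ∈ Icc 1 N, G k := haverage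
    _ ≤ (N : ℝ)⁻¹ * (V 0 / 2) := by gcongr
    _ = _ := by simp only [V, primalDualNormSq]; ring

theorem stmt_14 {E : Type*} [NormedAddCommGroup E] [InnerProductSpace ℝ E] [CompleteSpace E]
    (f₁ h φ : E → ℝ) (f₁' : E → E) (L : ℝ) (hL : 0 < L)
    (hf₁conv : ConvexOn ℝ Set.univ f₁)
    (hf₁diff : ∀ x, HasGradientAt f₁ (f₁' x) x)
    (hf₁lip : ∀ x y, ‖f₁' x - f₁' y‖ ≤ L * ‖x - y‖)
    (hhconv : ConvexOn ℝ Set.univ h)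
    (hφconv : ConvexOn ℝ Set.univ φ)
    (σ τ : ℝ) (hσ : 0 < σ) (hτ : 0 < τ) (hcond : σ * τ < 1 - σ * L)
    (x y xhat : ℕ → E)
    (hxhat : ∀ k, ∀ z : E,
      h (xhat (k + 1)) +
          1 / (2 * σ) * ‖xhat (k + 1) - (x k - σ • (y k + f₁' (x k)))‖ ^ 2 ≤
      h z + 1 / (2 * σ) * ‖z - (x k - σ • (y k + f₁' (x k)))‖ ^ 2)
    (hy : ∀ k, ∀ w : E,
      φ (y (k + 1)) +
          1 / (2 * τ) * ‖y (k + 1) - (y k + τ • (2 • xhat (k + 1) - x k))‖ ^ 2 ≤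
      φ w + 1 / (2 * τ) * ‖w - (y k + τ • (2 • xhat (k + 1) - x k))‖ ^ 2)
    (hx : ∀ k, x (k + 1) = xhat (k + 1))
    (xs ys : E)
    (hsaddle : ∀ a b : E,
      f₁ xs + h xs + ⟪xs, b⟫ - φ b ≤ f₁ xs + h xs + ⟪xs, ys⟫ - φ ys ∧
      f₁ xs + h xs + ⟪xs, ys⟫ - φ ys ≤ f₁ a + h a + ⟪a, ys⟫ - φ ys) :
    ∀ N : ℕ, 1 ≤ N →
      (f₁ ((N : ℝ)⁻¹ • ∑ k ∈ Finset.Icc 1 N, xhat k)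
          + h ((N : ℝ)⁻¹ • ∑ k ∈ Finset.Icc 1 N, xhat k)
          + φ ((N : ℝ)⁻¹ • ∑ k ∈ Finset.Icc 1 N, y k))
        - (f₁ xs + h xs + φ ys)
        - (⟪xs - (N : ℝ)⁻¹ • ∑ k ∈ Finset.Icc 1 N, xhat k, ys⟫
            - ⟪ys - (N : ℝ)⁻¹ • ∑ k ∈ Finset.Icc 1 N, y k, xs⟫) ≤
      1 / (2 * N) *
        ((1 / σ) * ‖x 0 - xs‖ ^ 2 - 2 * ⟪x 0 - xs, y 0 - ys⟫ + (1 / τ) * ‖y 0 - ys‖ ^ 2) :=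
  stmt_14_general f₁ h φ f₁' L hL hf₁conv hf₁diff hf₁lip hhconv hφconv σ τ hσ hτ hcond x y xhat
    hxhat hy hx xs ys
end
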